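/- arXiv:0904.2375 — 2 statements merged into one kernel-verified Lean document; each statement's English description precedes it below -/
import Mathlib

section
/- Let X = X(F⁰, ℓ, T) be a PFT in standard form over a finite alphabet Σ, let n ≥ 1 be an integer, let d = gcd(n, T), let X_d = X(F⁰, ℓ, d) be the PFT with the same forbidden set F⁰ and period d, and let G_{X_d} be the MS presentation of X_d. Then |P_n(X)| = |P_n(X_d)| = Σ_{w ∈ Σ^ℓ} | ⋃_{i=0}^{d−1} C_n(w^(i))_{G_{X_d}} |. -/
open scoped BigOperators

/-- Words of length `ℓ` over the alphabet `A`. -/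
abbrev Word (A : Type) (ℓ : ℕ) := Fin ℓ → A

/-- The periodic-finite-type shift in standard form `X(F⁰, ℓ, T)`:
bi-infinite sequences `x` such that for some shift `r < T`, for every index `i ≡ 0 (mod T)`,
the length-`ℓ` word of `σ^r x` starting at `i` avoids `F0`. -/
def pftSF {A : Type} {ℓ : ℕ} (F0 : Set (Word A ℓ)) (T : ℕ) : Set (ℤ → A) :=
  {x | ∃ r : ℕ, r < T ∧
    ∀ i : ℤ, (T : ℤ) ∣ i → (fun k : Fin ℓ => x (i + (r : ℤ) + ((k : ℕ) : ℤ))) ∉ F0}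

/-- `P_n(X)`: the points of `X = X(F⁰, ℓ, T)` that are periodic with period `n`. -/
def pftPer {A : Type} {ℓ : ℕ} (F0 : Set (Word A ℓ)) (T n : ℕ) : Set (ℤ → A) :=
  {x | x ∈ pftSF F0 T ∧ ∀ i : ℤ, x (i + (n : ℤ)) = x i}

/-- The exponential of a formal power series (the standard formula, which agrees with
`exp` whenever the constant term of `S` is `0`). -/
noncomputable def psExp (S : PowerSeries ℚ) : PowerSeries ℚ :=
  PowerSeries.mk fun n =>
    ∑ k ∈ Finset.range (n + 1), PowerSeries.coeff n (S ^ k) / (Nat.factorial k : ℚ)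

/-- The zeta function `ζ_X(t) = exp (Σ_{n ≥ 1} |P_n(X)| tⁿ / n)` of the PFT `X(F⁰, ℓ, T)`. -/
noncomputable def pftZeta {A : Type} {ℓ : ℕ} (F0 : Set (Word A ℓ)) (T : ℕ) : PowerSeries ℚ :=
  psExp (PowerSeries.mk fun n =>
    if n = 0 then 0 else (Nat.card (pftPer F0 T n) : ℚ) / (n : ℚ))

/-- A word-based graph (WBG) with `T` phases, each phase a set of words of length `ℓ`. -/
structure WBG (A : Type) (ℓ T : ℕ) where
  V : Fin T → Set (Word A ℓ)

/-- Vertices of a WBG: pairs `(i, w)` with `w ∈ V^(i)`. -/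
abbrev WBG.Vertex {A : Type} {ℓ T : ℕ} (G : WBG A ℓ T) : Type :=
  {p : Fin T × Word A ℓ // p.2 ∈ G.V p.1}

/-- The labeled edge relation of a WBG: there is an edge labeled `a` from `u^(i)` to
`v^((i+1) mod T)` iff `u₂⋯u_ℓ = v₁⋯v_{ℓ-1}` and `v_ℓ = a`. -/
def WBG.Edge {A : Type} {ℓ T : ℕ} (G : WBG A ℓ T) (u v : G.Vertex) (a : A) : Prop :=
  ((v.1.1 : ℕ) = ((u.1.1 : ℕ) + 1) % T) ∧
  (∀ (k : ℕ) (h : k + 1 < ℓ), u.1.2 ⟨k + 1, h⟩ = v.1.2 ⟨k, by omega⟩) ∧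
  (∀ h : ℓ - 1 < ℓ, v.1.2 ⟨ℓ - 1, h⟩ = a)

/-- A path of length `n` (i.e. with `n` edges) in a WBG, together with its label sequence. -/
structure WBG.Path {A : Type} {ℓ T : ℕ} (G : WBG A ℓ T) (n : ℕ) where
  vtx : Fin (n + 1) → G.Vertex
  lbl : Fin n → A
  adj : ∀ k : Fin n, G.Edge (vtx k.castSucc) (vtx k.succ) (lbl k)

/-- The `n`-periodic bi-infinite repetition `(f 0 ⋯ f (n-1))^∞`. -/
def periodize {A : Type} {n : ℕ} (hn : 0 < n) (f : Fin n → A) : ℤ → A :=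
  fun j => f ⟨(j % (n : ℤ)).toNat, by
    have h1 : 0 ≤ j % (n : ℤ) := Int.emod_nonneg j (by exact_mod_cast hn.ne')
    have h2 : j % (n : ℤ) < (n : ℤ) := Int.emod_lt_of_pos j (by exact_mod_cast hn)
    omega⟩

/-- `C_n(w^(i))_G`: the set of `n`-periodic bi-infinite sequences generated by cycles
of length `n` at the vertex `w^(i)` of `G` (empty if `w ∉ V^(i)` or `n = 0`). -/
def WBG.CnSet {A : Type} {ℓ T : ℕ} (G : WBG A ℓ T) (i : Fin T) (w : Word A ℓ) (n : ℕ) :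
    Set (ℤ → A) :=
  {x | ∃ (p : G.Path n) (hn : 0 < n),
    (p.vtx 0).1 = (i, w) ∧ (p.vtx (Fin.last n)).1 = (i, w) ∧ x = periodize hn p.lbl}

noncomputable instance WBG.instFintypeVertex {A : Type} {ℓ T : ℕ} [Fintype A] (G : WBG A ℓ T) :
    Fintype G.Vertex := Fintype.ofFinite _

noncomputable instance WBG.instDecidableEqVertex {A : Type} {ℓ T : ℕ} (G : WBG A ℓ T) :
    DecidableEq G.Vertex := Classical.decEq _

open Classical in
/-- The (0–1) adjacency matrix of a WBG, with rational entries. -/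
noncomputable def WBG.adjMatrix {A : Type} {ℓ T : ℕ} [Fintype A] (G : WBG A ℓ T) :
    Matrix G.Vertex G.Vertex ℚ :=
  Matrix.of fun u v => if ∃ a : A, G.Edge u v a then 1 else 0

/-- The diagonal block of `(adjacency matrix)^T` indexed by the vertices in phase `i`. -/
noncomputable def WBG.phaseBlock {A : Type} {ℓ T : ℕ} [Fintype A] (G : WBG A ℓ T) (i : ℕ) :
    Matrix {v : G.Vertex // (v.1.1 : ℕ) = i} {v : G.Vertex // (v.1.1 : ℕ) = i} ℚ :=
  Matrix.of fun u v => (G.adjMatrix ^ T) u.1 v.1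

/-- The letter `z_m` of a binary word `z ∈ {0,1}^T`, read cyclically (indices mod `T`). -/
def zAt {T : ℕ} (z : Fin T → Bool) (m : ℕ) : Bool :=
  if h : m % T < T then z ⟨m % T, h⟩ else false

/-- `L_z`: the length of the primitive root `z^♯` of `z`, i.e. the least positive `L`
dividing `T` such that `z = (z^♯)^{T/L}` for the length-`L` prefix `z^♯` of `z`. -/
noncomputable def primLen {T : ℕ} (z : Fin T → Bool) : ℕ :=
  sInf {L : ℕ | 0 < L ∧ L ∣ T ∧ ∀ m : ℕ, zAt z (m + L) = zAt z m}

/-- `W_z`: the number of `1`s in the primitive root `z^♯` of `z`. -/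
noncomputable def primOnes {T : ℕ} (z : Fin T → Bool) : ℕ :=
  ((Finset.range (primLen z)).filter fun m => zAt z m = true).card

/-- `N_z = T / L_z`, so that `z = (z^♯)^{N_z}`. -/
noncomputable def primCopies {T : ℕ} (z : Fin T → Bool) : ℕ := T / primLen z

/-- The WBG `G_z` with `L_z` phases: phase `i` is `Σ^ℓ ∖ F⁰` if `z_i = 1`, else `Σ^ℓ`. -/
noncomputable def zGraph {A : Type} {ℓ : ℕ} (F0 : Set (Word A ℓ)) {T : ℕ} (z : Fin T → Bool) :
    WBG A ℓ (primLen z) :=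
  ⟨fun i => if zAt z (i : ℕ) then {w | w ∉ F0} else Set.univ⟩

/-- The MS presentation of the PFT `X(F⁰, ℓ, T)`: the WBG with `T` phases where
`V^(0) = Σ^ℓ ∖ F⁰` and `V^(i) = Σ^ℓ` for `i ≠ 0`. -/
def msGraph {A : Type} {ℓ : ℕ} (F0 : Set (Word A ℓ)) (T : ℕ) : WBG A ℓ T :=
  ⟨fun i => if (i : ℕ) = 0 then {w | w ∉ F0} else Set.univ⟩

/-- `Ω` is a set of conjugacy-class representatives of `{0,1}^T ∖ {0^T}` (under cyclic
shifts), each representative beginning with the symbol `1`. -/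
def IsRepSet {T : ℕ} (Ω : Finset (Fin T → Bool)) : Prop :=
  (∀ z ∈ Ω, zAt z 0 = true) ∧
  ∀ y : Fin T → Bool, (∃ i, y i = true) →
    ∃! z : Fin T → Bool, z ∈ Ω ∧ ∃ q : ℕ, ∀ m : ℕ, zAt z m = zAt y (m + q)

/-- `J(z,q) = {(q - i) mod T : 0 ≤ i ≤ T-1, z_i = 1}`, as a subset of `Fin T`. -/
def Jset {T : ℕ} (z : Fin T → Bool) (q : ℕ) : Set (Fin T) :=
  {j | ∃ i : Fin T, z i = true ∧ (j : ℕ) = (q + T - (i : ℕ)) % T}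

/-- A general PFT `X_{F̂,T}` given an ordered list `F̂^(0), …, F̂^(T-1)` of sets of
forbidden words (`Fh j` is read for `j ∈ {0, …, T-1}` via `j = i mod T`). -/
def pftGen {A : Type} (T : ℕ) (Fh : ℕ → Set (List A)) : Set (ℤ → A) :=
  {x | ∃ r : ℕ, r < T ∧ ∀ i : ℤ, ∀ f ∈ Fh ((i % (T : ℤ)).toNat),
    ¬ ∀ (k : ℕ) (hk : k < f.length), f.get ⟨k, hk⟩ = x (i + (r : ℤ) + (k : ℤ))}

/-!
By Bézout, `n ℤ + T ℤ = gcd(n, T) ℤ`, so for an `n`-periodic sequence the windows at the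
positions `T ℤ + r` are the same as those at `gcd(n, T) ℤ + r`; hence `P_n(X) = P_n(X_d)`.

For `d ∣ n`, a sequence `x` lies in `X_d` iff it labels a bi-infinite walk in `G_{X_d}`; along
such a walk the vertex at time `k` is forced to be the window `x_{k-ℓ} ⋯ x_{k-1}` in phase
`k + c mod d`. If `x` is `n`-periodic, so is the walk, and its segment `[0, n]` is a cycle at
`(x_{-ℓ} ⋯ x_{-1})^(c)`; conversely, repeating a cycle gives a periodic walk. So
`⋃ᵢ C_n(w^(i))` is the fibre of `P_n(X_d)` over `w` under `x ↦ x_{-ℓ} ⋯ x_{-1}`, and summing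
over `w` counts `P_n(X_d)`.
-/

open Function

section Periodize
variable {A : Type} {n : ℕ}

lemma Function.Periodic.apply_eq_of_dvd_sub {x : ℤ → A} (hx : Periodic x n) {p q : ℤ}
    (h : (n : ℤ) ∣ p - q) : x p = x q := by
  obtain ⟨c, hc⟩ := h
  rw [show p = q + c * n by linear_combination hc]
  exact hx.int_mul c q

lemma periodize_apply_of_dvd_sub (hn : 0 < n) (f : Fin n → A) {j : ℤ} {m : ℕ} (hm : m < n)
    (h : (n : ℤ) ∣ j - m) : periodize hn f j = f ⟨m, hm⟩ := by
  have hjm : j % n = m := by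
    rw [← (Int.modEq_iff_dvd.mpr h).eq, Int.emod_eq_of_lt (by omega) (by omega)]
  simp only [periodize, hjm, Int.toNat_natCast]

lemma periodize_periodic (hn : 0 < n) (f : Fin n → A) : Periodic (periodize hn f) n := by
  intro j
  simp only [periodize, Int.add_emod_right]

lemma Function.Periodic.eq_periodize {x : ℤ → A} (hx : Periodic x n) (hn : 0 < n) :
    x = periodize hn (fun k => x k) := by
  funext j
  have h0 : 0 ≤ j % n := Int.emod_nonneg j (by omega)
  have hlt : j % n < n := Int.emod_lt_of_pos j (by omega)
  have hdvd : (n : ℤ) ∣ j - (j % n).toNat := by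
    rw [Int.toNat_of_nonneg h0]; exact Int.modEq_iff_dvd.mp (Int.mod_modEq j n)
  rw [periodize_apply_of_dvd_sub hn _ (by omega) hdvd]
  exact hx.apply_eq_of_dvd_sub hdvd

lemma finite_setOf_periodic [Finite A] (hn : 0 < n) : {x : ℤ → A | Periodic x n}.Finite :=
  (Set.finite_range (periodize hn)).subset fun _ hx => ⟨_, (Periodic.eq_periodize hx hn).symm⟩

end Periodize

def window {A : Type} {ℓ : ℕ} (x : ℤ → A) (i : ℤ) : Word A ℓ := fun k => x (i + (k : ℕ))

namespace WBG
variable {A : Type} {ℓ T : ℕ} {G : WBG A ℓ T}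

def IsBiWalk (G : WBG A ℓ T) (v : ℤ → G.Vertex) (a : ℤ → A) : Prop :=
  ∀ k, G.Edge (v k) (v (k + 1)) (a k)

variable {v : ℤ → G.Vertex} {a : ℤ → A}

lemma IsBiWalk.word_eq_window (h : G.IsBiWalk v a) (k : ℤ) : (v k).1.2 = window a (k - ℓ) := by
  suffices ∀ m j (hj : j < ℓ), j + m + 1 = ℓ → ∀ k, (v k).1.2 ⟨j, hj⟩ = a (k - ℓ + j) from
    funext fun j => this (ℓ - 1 - j) j j.2 (by omega) k
  intro m
  induction m with
  | zero =>
    intro j hj hjm k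
    have := (h (k - 1)).2.2 (by omega)
    rw [sub_add_cancel] at this
    convert this using 2
    · simp only [Fin.mk.injEq]; omega
    · omega
  | succ m ih =>
    intro j hj hjm k
    have := (h (k - 1)).2.1 j (by omega)
    rw [sub_add_cancel] at this
    rw [← this, ih (j + 1) (by omega) (by omega)]
    congr 1; push_cast; ring

lemma IsBiWalk.phase_modEq (h : G.IsBiWalk v a) (k : ℤ) :
    ((v k).1.1 : ℤ) ≡ (v 0).1.1 + k [ZMOD T] := by
  have step : ∀ k, ((v (k + 1)).1.1 : ℤ) ≡ (v k).1.1 + 1 [ZMOD T] := fun k => by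
    rw [(h k).1]; push_cast; exact Int.mod_modEq _ _
  induction k using Int.induction_on with
  | zero => simp [Int.ModEq.refl]
  | succ k ih => exact (step k).trans (by rw [← add_assoc]; exact ih.add_right 1)
  | pred k ih =>
    have := step (-k - 1)
    rw [sub_add_cancel] at this
    refine Int.ModEq.add_right_cancel' 1 ?_
    convert this.symm.trans ih using 1
    ring

lemma IsBiWalk.apply_add_eq {n : ℕ} (h : G.IsBiWalk v a) (ha : Function.Periodic a n)
    (hTn : T ∣ n) (k : ℤ) : v (k + n) = v k := by
  have hphase : ((v (k + n)).1.1 : ℤ) ≡ (v k).1.1 [ZMOD T] := by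
    refine (h.phase_modEq _).trans (Int.ModEq.trans ?_ (h.phase_modEq k).symm)
    rw [← add_assoc]
    exact Int.modEq_iff_dvd.mpr (by simpa using Int.natCast_dvd_natCast.mpr hTn)
  refine Subtype.ext (Prod.ext (Fin.ext ?_) ?_)
  · exact (Int.natCast_modEq_iff.mp hphase).eq_of_lt_of_lt (Fin.is_lt _) (Fin.is_lt _)
  · rw [h.word_eq_window, h.word_eq_window]
    funext j
    exact ha.apply_eq_of_dvd_sub ⟨1, by ring⟩

@[simps]
def Path.ofBiWalk (h : G.IsBiWalk v a) (n : ℕ) : G.Path n where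
  vtx k := v k
  lbl k := a k
  adj k := by simpa using h k

lemma Path.isBiWalk_periodize {n : ℕ} (hn : 0 < n) (p : G.Path n)
    (hcyc : p.vtx (Fin.last n) = p.vtx 0) :
    G.IsBiWalk (periodize hn (p.vtx ∘ Fin.castSucc)) (periodize hn p.lbl) := by
  intro k
  have h0 : 0 ≤ k % n := Int.emod_nonneg k (by omega)
  have hlt : k % n < n := Int.emod_lt_of_pos k (by omega)
  set m := (k % n).toNat
  have hm : m < n := by omega
  have hdvd : (n : ℤ) ∣ k - m := by
    rw [Int.toNat_of_nonneg h0]; exact Int.modEq_iff_dvd.mp (Int.mod_modEq k n)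
  have hnext : periodize hn (p.vtx ∘ Fin.castSucc) (k + 1) = p.vtx (Fin.succ ⟨m, hm⟩) := by
    rcases lt_or_eq_of_le (Nat.succ_le_of_lt hm) with hm1 | hm1
    · rw [periodize_apply_of_dvd_sub hn _ hm1 (by push_cast; simpa using hdvd)]
      rfl
    · have hdvd0 : (n : ℤ) ∣ k + 1 - (0 : ℕ) := by
        rw [show k + 1 - ((0 : ℕ) : ℤ) = (k - m) + n by omega]
        exact dvd_add hdvd dvd_rfl
      rw [periodize_apply_of_dvd_sub hn _ hn hdvd0, Function.comp_apply,
        show (Fin.succ ⟨m, hm⟩ : Fin (n + 1)) = Fin.last n from Fin.ext (by simp [← hm1]), hcyc]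
      rfl
  rw [hnext, periodize_apply_of_dvd_sub hn _ hm hdvd, periodize_apply_of_dvd_sub hn _ hm hdvd]
  exact p.adj ⟨m, hm⟩

end WBG

section MSPresentation
variable {A : Type} {ℓ T : ℕ} {F0 : Set (Word A ℓ)} {x : ℤ → A}

lemma exists_lt_dvd_add (hT : 0 < T) (a : ℤ) : ∃ r : ℕ, r < T ∧ (T : ℤ) ∣ a + r := by
  have h0 : 0 ≤ (-a) % T := Int.emod_nonneg _ (by omega)
  have hlt : (-a) % T < T := Int.emod_lt_of_pos _ (by omega)
  refine ⟨((-a) % T).toNat, by omega, ?_⟩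
  rw [Int.toNat_of_nonneg h0, show a + (-a) % T = -(-a - (-a) % T) by ring]
  exact dvd_neg.mpr (Int.modEq_iff_dvd.mp (Int.mod_modEq (-a) T))

lemma WBG.IsBiWalk.mem_pftSF {v : ℤ → (msGraph F0 T).Vertex}
    (h : (msGraph F0 T).IsBiWalk v x) : x ∈ pftSF F0 T := by
  obtain ⟨r, hrT, hr⟩ := exists_lt_dvd_add (v 0).1.1.pos ((v 0).1.1 + ℓ)
  refine ⟨r, hrT, fun i hi => ?_⟩
  set k := i + r + ℓ
  have hphase : ((v k).1.1 : ℕ) = 0 := by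
    have hdvd : (T : ℤ) ∣ ((v k).1.1 : ℕ) := by
      have := (dvd_add hr hi).sub (Int.modEq_iff_dvd.mp (h.phase_modEq k))
      rwa [show ∀ p : ℤ, (v 0).1.1 + ℓ + r + i - ((v 0).1.1 + k - p) = p by
        intro p; simp only [k]; ring] at this
    exact Nat.eq_zero_of_dvd_of_lt (Int.natCast_dvd_natCast.mp hdvd) (Fin.is_lt _)
  have hmem := (v k).2
  simp only [msGraph, hphase, if_true, h.word_eq_window k] at hmem
  rwa [show k - ℓ = i + r by simp [k]] at hmem

lemma exists_isBiWalk_msGraph (hx : x ∈ pftSF F0 T) : ∃ v, (msGraph F0 T).IsBiWalk v x := by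
  obtain ⟨r, hrT, hr⟩ := hx
  have hT : (0 : ℤ) < T := by omega
  let phase (k : ℤ) : Fin T := ⟨((k - ℓ - r) % T).toNat, by
    have := Int.emod_lt_of_pos (k - ℓ - r) hT; omega⟩
  have hmem (k : ℤ) : window x (k - ℓ) ∈ (msGraph F0 T).V (phase k) := by
    by_cases h0 : (phase k : ℕ) = 0
    · simp only [msGraph, h0, if_true, Set.mem_ofPred_eq]
      have hdvd : (T : ℤ) ∣ k - ℓ - r := Int.dvd_of_emod_eq_zero (by
        have := Int.emod_nonneg (k - ℓ - r) hT.ne'; simp [phase] at h0; omega)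
      rw [show k - ℓ = (k - ℓ - r) + r by ring]
      exact hr _ hdvd
    · simp [msGraph, h0]
  refine ⟨fun k => ⟨(phase k, window x (k - ℓ)), hmem k⟩, fun k => ⟨?_, ?_, ?_⟩⟩
  · show ((k + 1 - ℓ - r) % T).toNat = (((k - ℓ - r) % T).toNat + 1) % T
    zify
    rw [Int.toNat_of_nonneg (Int.emod_nonneg _ hT.ne'),
      Int.toNat_of_nonneg (Int.emod_nonneg _ hT.ne'), Int.emod_add_emod]
    ring_nf
  · intro j hj
    simp only [window]
    congr 1; push_cast; ring
  · intro hℓ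
    simp only [window]
    congr 1; omega

lemma iUnion_cnSet_msGraph {n : ℕ} (hn : 0 < n) (hTn : T ∣ n) (w : Word A ℓ) :
    ⋃ i, (msGraph F0 T).CnSet i w n = {x | x ∈ pftPer F0 T n ∧ window x (-ℓ) = w} := by
  ext x
  simp only [Set.mem_iUnion, Set.mem_ofPred_eq]
  constructor
  · rintro ⟨i, p, -, h0, hlast, rfl⟩
    have hwalk := p.isBiWalk_periodize hn (Subtype.ext (hlast.trans h0.symm))
    refine ⟨⟨hwalk.mem_pftSF, periodize_periodic hn _⟩, ?_⟩
    have hstart := hwalk.word_eq_window 0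
    rw [periodize_apply_of_dvd_sub hn _ hn (m := 0) (by simp)] at hstart
    simpa [h0] using hstart.symm
  · rintro ⟨⟨hx, hper⟩, rfl⟩
    obtain ⟨v, hv⟩ := exists_isBiWalk_msGraph hx
    have hstart : (v 0).1 = ((v 0).1.1, window x (-ℓ)) :=
      Prod.ext rfl (by simpa using hv.word_eq_window 0)
    have hclosed : v n = v 0 := by simpa using hv.apply_add_eq hper hTn 0
    refine ⟨(v 0).1.1, WBG.Path.ofBiWalk hv n, hn, ?_, ?_, Periodic.eq_periodize hper hn⟩
    · simpa using hstart
    · simpa [hclosed] using hstart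

end MSPresentation

section GcdReduction
variable {A : Type} {ℓ n T : ℕ}

lemma Function.Periodic.exists_window_eq {x : ℤ → A} (hx : Periodic x n) {s t : ℤ}
    (h : (Nat.gcd n T : ℤ) ∣ s - t) :
    ∃ j : ℤ, (T : ℤ) ∣ j ∧ (window x s : Word A ℓ) = window x (j + t) := by
  obtain ⟨c, hc⟩ := h
  have hbez : (Nat.gcd n T : ℤ) = n * Int.gcdA n T + T * Int.gcdB n T := by
    exact_mod_cast Int.gcd_eq_gcd_ab n T
  refine ⟨T * (Int.gcdB n T * c), dvd_mul_right _ _, funext fun k => ?_⟩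
  exact hx.apply_eq_of_dvd_sub ⟨Int.gcdA n T * c, by linear_combination hc + c * hbez⟩

lemma pftPer_eq_pftPer_gcd (hT : 0 < T) (F0 : Set (Word A ℓ)) :
    pftPer F0 T n = pftPer F0 (Nat.gcd n T) n := by
  have hd : 0 < Nat.gcd n T := Nat.gcd_pos_of_pos_right n hT
  ext x
  constructor
  · rintro ⟨⟨r, -, hr⟩, hper⟩
    refine ⟨⟨r % Nat.gcd n T, Nat.mod_lt r hd, fun i hi => ?_⟩, hper⟩
    have hdvd : (Nat.gcd n T : ℤ) ∣ i + (r % Nat.gcd n T : ℕ) - r := by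
      rw [Int.natCast_mod, show ∀ a b c : ℤ, a + b - c = a - (c - b) by intros; ring]
      exact dvd_sub hi (Int.modEq_iff_dvd.mp (Int.mod_modEq _ _))
    obtain ⟨j, hj, hwin⟩ := Periodic.exists_window_eq (ℓ := ℓ) hper hdvd
    show window x _ ∉ F0
    rw [hwin]
    exact hr j hj
  · rintro ⟨⟨r, hr, hwin⟩, hper⟩
    have hdT := Nat.gcd_dvd_right n T
    exact ⟨⟨r, hr.trans_le (Nat.le_of_dvd hT hdT), fun i hi =>
      hwin i ((Int.natCast_dvd_natCast.mpr hdT).trans hi)⟩, hper⟩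

end GcdReduction

lemma Nat.card_eq_sum_card_fiberwise {α β : Type*} [Fintype β] {S : Set α} (hS : S.Finite)
    (f : α → β) : Nat.card S = ∑ b, Nat.card {x | x ∈ S ∧ f x = b} := by
  have := hS.to_subtype
  rw [← Nat.card_congr (Equiv.sigmaFiberEquiv fun x : S => f x), Nat.card_sigma]
  exact Finset.sum_congr rfl fun b _ =>
    Nat.card_congr (Equiv.subtypeSubtypeEquivSubtypeInter (· ∈ S) (f · = b))

theorem pft_card_periodic_eq_sum_card_union_general {A : Type} [Fintype A] {ℓ T n : ℕ}
    (hT : 1 ≤ T) (hn : 1 ≤ n) (F0 : Set (Word A ℓ)) :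
    Nat.card (pftPer F0 T n) = Nat.card (pftPer F0 (Nat.gcd n T) n) ∧
    Nat.card (pftPer F0 T n) =
      ∑ w : Word A ℓ,
        Nat.card (⋃ i : Fin (Nat.gcd n T), (msGraph F0 (Nat.gcd n T)).CnSet i w n) := by
  have hgcd := pftPer_eq_pftPer_gcd (n := n) hT F0
  have hfin : (pftPer F0 (Nat.gcd n T) n).Finite :=
    (finite_setOf_periodic hn).subset fun _ hx => hx.2
  refine ⟨by rw [hgcd], ?_⟩
  rw [hgcd, Nat.card_eq_sum_card_fiberwise hfin fun x => (window x (-ℓ) : Word A ℓ)]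
  simp only [iUnion_cnSet_msGraph hn (Nat.gcd_dvd_left n T)]

/-- **Corollary.** For a PFT `X = X(F⁰, ℓ, T)` in standard form, `n ≥ 1`, `d = gcd(n,T)`,
the PFT `X_d = X(F⁰, ℓ, d)`, and the MS presentation `G_{X_d}` of `X_d`:
`|P_n(X)| = |P_n(X_d)| = Σ_{w ∈ Σ^ℓ} |⋃_{i=0}^{d-1} C_n(w^(i))_{G_{X_d}}|`. -/
theorem pft_card_periodic_eq_sum_card_union {A : Type} [Fintype A] [Nonempty A] {ℓ T n : ℕ}
    (hℓ : 1 ≤ ℓ) (hT : 1 ≤ T) (hn : 1 ≤ n) (F0 : Set (Word A ℓ)) :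
    Nat.card (pftPer F0 T n) = Nat.card (pftPer F0 (Nat.gcd n T) n) ∧
    Nat.card (pftPer F0 T n) =
      ∑ w : Word A ℓ,
        Nat.card (⋃ i : Fin (Nat.gcd n T), (msGraph F0 (Nat.gcd n T)).CnSet i w n) :=
  pft_card_periodic_eq_sum_card_union_general hT hn F0
end

section
/- Let X = X(F⁰, ℓ, T) be a PFT in standard form over a finite alphabet Σ with MS presentation G_X. Let z ∈ Ω_T, let 0 ≤ q ≤ L_z − 1, and set J = J(z, q) = { (q − i) mod T : 0 ≤ i ≤ T−1, z_i = 1 }. Then for every integer n ≥ 1 with n ≡ 0 (mod T) and every word w ∈ Σ^ℓ, C_n(w^(q))_{G_z} = ⋂_{j ∈ J} C_n(w^(j))_{G_X}. -/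
open scoped BigOperators

/-!
A cycle of length `n` at `w^(i)` in a word-based graph is determined by its start word and its
labels: the word at step `k` is `w` with the first `k` labels shifted in. So membership of `x`
in `C_n(w^(i))_G` only asks that `x` be `n`-periodic, that shifting `n` labels into `w` gives `w`
back, and that the word at step `k` lie in the phase `(i + k) mod T`. The graphs `G_z` and `G_X`
differ only in the phases, and the phase of `G_z` at step `k` from `q` is the intersection of the
phases of `G_X` at step `k` from the `j ∈ J(z, q)`: the word is forbidden to lie in `F⁰` exactly
when `z_{q+k} = 1`, and `(j + k) mod T = 0` for `j = (q - i) mod T` exactly when `q + k ≡ i`.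
As `z` begins with `1`, `J(z, q)` is nonempty, so the graph-independent conditions pass to the
intersection.
-/

section CycleWords

variable {A : Type} {ℓ T n : ℕ}

def shiftIn (w : Word A ℓ) (x : ℤ → A) (k : ℕ) : Word A ℓ :=
  fun t => if h : k + t < ℓ then w ⟨k + t, h⟩ else x ((k + t - ℓ : ℕ) : ℤ)

@[simp]
lemma shiftIn_zero (w : Word A ℓ) (x : ℤ → A) : shiftIn w x 0 = w := by
  funext t
  simp [shiftIn]

lemma shiftIn_succ_apply (w : Word A ℓ) (x : ℤ → A) (k t : ℕ) (ht : t + 1 < ℓ) :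
    shiftIn w x (k + 1) ⟨t, by omega⟩ = shiftIn w x k ⟨t + 1, ht⟩ := by
  simp only [shiftIn, show k + 1 + t = k + (t + 1) by omega]

lemma shiftIn_succ_last (w : Word A ℓ) (x : ℤ → A) (k : ℕ) (h : ℓ - 1 < ℓ) :
    shiftIn w x (k + 1) ⟨ℓ - 1, h⟩ = x k := by
  simp only [shiftIn, dif_neg (show ¬ k + 1 + (ℓ - 1) < ℓ by omega)]
  congr
  omega

lemma periodize_natCast (hn : 0 < n) (f : Fin n → A) (m : Fin n) :
    periodize hn f (m : ℕ) = f m := by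
  have hm : ((m : ℕ) : ℤ) % n = (m : ℕ) :=
    Int.emod_eq_of_lt (by positivity) (by exact_mod_cast m.isLt)
  simp only [periodize, hm, Int.toNat_natCast, Fin.eta]

namespace WBG.Path

variable {G : WBG A ℓ T} (p : G.Path n)

lemma phase_vtx (k : Fin (n + 1)) :
    ((p.vtx k).1.1 : ℕ) = ((p.vtx 0).1.1 + (k : ℕ)) % T := by
  induction k using Fin.induction with
  | zero => simp [Nat.mod_eq_of_lt]
  | succ k ih =>
    rw [(p.adj k).1, ih, Fin.val_castSucc, Nat.mod_add_mod, Fin.val_succ, Nat.add_assoc]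

lemma word_vtx {x : ℤ → A} (hx : ∀ k, p.lbl k = x (k : ℕ)) (k : Fin (n + 1)) :
    (p.vtx k).1.2 = shiftIn (p.vtx 0).1.2 x k := by
  induction k using Fin.induction with
  | zero => simp
  | succ k ih =>
    obtain ⟨-, hshift, hlast⟩ := p.adj k
    funext t
    by_cases ht : (t : ℕ) + 1 < ℓ
    · rw [← hshift t ht, ih, Fin.val_castSucc, Fin.val_succ, shiftIn_succ_apply _ _ _ _ ht]
    · have hℓ := t.isLt
      rw [show t = ⟨ℓ - 1, by omega⟩ from Fin.ext (show (t : ℕ) = ℓ - 1 by omega), hlast, hx,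
        Fin.val_succ, shiftIn_succ_last]

end WBG.Path

theorem WBG.mem_CnSet_iff (G : WBG A ℓ T) (i : Fin T) (w : Word A ℓ) (hn : 0 < n)
    (hTn : T ∣ n) (x : ℤ → A) :
    x ∈ G.CnSet i w n ↔ x ∈ Set.range (periodize hn) ∧ shiftIn w x n = w ∧
      ∀ k ≤ n, shiftIn w x k ∈ G.V ⟨((i : ℕ) + k) % T, Nat.mod_lt _ i.pos⟩ := by
  constructor
  · rintro ⟨p, -, hstart, hend, rfl⟩
    have hword (k : Fin (n + 1)) : (p.vtx k).1.2 = shiftIn w (periodize hn p.lbl) k := by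
      simpa [hstart] using p.word_vtx (fun k => (periodize_natCast hn p.lbl k).symm) k
    refine ⟨⟨p.lbl, rfl⟩, ?_, fun k hk => ?_⟩
    · simpa [hend] using (hword (Fin.last n)).symm
    · have hphase : (p.vtx ⟨k, by omega⟩).1.1 = ⟨((i : ℕ) + k) % T, Nat.mod_lt _ i.pos⟩ :=
        Fin.ext ((p.phase_vtx _).trans (by rw [congrArg Prod.fst hstart]))
      simpa only [hword, hphase] using (p.vtx ⟨k, by omega⟩).2
  · rintro ⟨⟨f, rfl⟩, hclose, hmem⟩
    refine ⟨⟨fun k => ⟨(_, shiftIn w (periodize hn f) k), hmem k (Nat.lt_succ_iff.mp k.isLt)⟩,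
      f, fun k => ⟨?_, fun t ht => (shiftIn_succ_apply _ _ _ t ht).symm, fun h => ?_⟩⟩,
      hn, ?_, ?_, rfl⟩
    · simp [Nat.add_assoc]
    · simp [shiftIn_succ_last, periodize_natCast]
    · simp [Nat.mod_eq_of_lt]
    · obtain ⟨c, rfl⟩ := hTn
      simpa [Nat.mod_eq_of_lt] using hclose

end CycleWords

section Phases

variable {A : Type} {ℓ T : ℕ} (F0 : Set (Word A ℓ)) (z : Fin T → Bool)

lemma zAt_periodic : Function.Periodic (zAt z) T := fun m => by
  simp [zAt, Nat.add_mod_right]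

lemma zAt_eq_apply (hT : 0 < T) (m : ℕ) :
    zAt z m = z ⟨m % T, Nat.mod_lt m hT⟩ :=
  dif_pos _

lemma primLen_spec (hT : 0 < T) :
    0 < primLen z ∧ primLen z ∣ T ∧ Function.Periodic (zAt z) (primLen z) :=
  Nat.sInf_mem (s := {L | 0 < L ∧ L ∣ T ∧ Function.Periodic (zAt z) L})
    ⟨T, hT, dvd_rfl, zAt_periodic z⟩

lemma mem_zGraph_V_iff (u : Word A ℓ) (i : Fin (primLen z)) :
    u ∈ (zGraph F0 z).V i ↔ (zAt z i = true → u ∉ F0) := by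
  by_cases h : zAt z i <;> simp [zGraph, h]

lemma mem_msGraph_V_iff (u : Word A ℓ) (j : Fin T) :
    u ∈ (msGraph F0 T).V j ↔ ((j : ℕ) = 0 → u ∉ F0) := by
  by_cases h : (j : ℕ) = 0 <;> simp [msGraph, h]

lemma sub_add_mod_eq_zero_iff (q k : ℕ) (i : Fin T) :
    ((q + T - i) % T + k) % T = 0 ↔ (q + k) % T = i := by
  have hi := i.isLt
  calc ((q + T - i) % T + k) % T = 0
      ↔ (((q + T - i) % T + k : ℕ) : ZMod T) = ((0 : ℕ) : ZMod T) := by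
        rw [ZMod.natCast_eq_natCast_iff', Nat.zero_mod]
    _ ↔ ((q + k : ℕ) : ZMod T) = ((i : ℕ) : ZMod T) := by
        push_cast [ZMod.natCast_mod, Nat.cast_sub (show (i : ℕ) ≤ q + T by omega),
          ZMod.natCast_self]
        constructor <;> intro h <;> linear_combination h
    _ ↔ (q + k) % T = i := by
        rw [ZMod.natCast_eq_natCast_iff', Nat.mod_eq_of_lt hi]

lemma exists_mem_Jset_add_mod_eq_zero_iff (hT : 0 < T) (q k : ℕ) :
    (∃ j ∈ Jset z q, ((j : ℕ) + k) % T = 0) ↔ zAt z (q + k) = true := by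
  rw [zAt_eq_apply z hT]
  constructor
  · rintro ⟨j, ⟨i, hi, hj⟩, hjk⟩
    rw [hj, sub_add_mod_eq_zero_iff] at hjk
    obtain rfl : i = ⟨(q + k) % T, Nat.mod_lt _ hT⟩ := Fin.ext hjk.symm
    exact hi
  · intro h
    exact ⟨⟨_, Nat.mod_lt (q + T - (q + k) % T) hT⟩, ⟨_, h, rfl⟩,
      (sub_add_mod_eq_zero_iff q k ⟨(q + k) % T, Nat.mod_lt _ hT⟩).2 rfl⟩

lemma zGraph_V_eq_iInter_msGraph_V (hT : 0 < T) (i : Fin (primLen z)) (k : ℕ) :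
    (zGraph F0 z).V ⟨((i : ℕ) + k) % primLen z, Nat.mod_lt _ i.pos⟩ =
      ⋂ j ∈ Jset z i, (msGraph F0 T).V ⟨((j : ℕ) + k) % T, Nat.mod_lt _ hT⟩ := by
  ext u
  simp only [Set.mem_iInter, mem_zGraph_V_iff, mem_msGraph_V_iff,
    (primLen_spec z hT).2.2.map_mod_nat, ← exists_mem_Jset_add_mod_eq_zero_iff z hT,
    forall_exists_index, and_imp]

lemma Jset_nonempty (hz : ∃ i, z i = true) (q : ℕ) : (Jset z q).Nonempty := by
  obtain ⟨i, hi⟩ := hz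
  exact ⟨⟨_, Nat.mod_lt (q + T - i) i.pos⟩, i, hi, rfl⟩

end Phases

theorem zGraph_CnSet_eq_iInter_general {A : Type} {ℓ T : ℕ} (F0 : Set (Word A ℓ))
    (Ω : Finset (Fin T → Bool)) (hΩ : IsRepSet Ω)
    (z : Fin T → Bool) (hz : z ∈ Ω) (q : ℕ) (hq : q < primLen z)
    (n : ℕ) (hn : 0 < n) (hTn : T ∣ n) (w : Word A ℓ) :
    (zGraph F0 z).CnSet ⟨q, hq⟩ w n =
      ⋂ j ∈ Jset z q, (msGraph F0 T).CnSet j w n := by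
  have hT : 0 < T := Nat.pos_of_dvd_of_pos hTn hn
  obtain ⟨j₀, hj₀⟩ := Jset_nonempty z ⟨⟨0, hT⟩, by simpa [zAt_eq_apply z hT] using hΩ.1 z hz⟩ q
  have hphase (k : ℕ) := Set.ext_iff.1 (zGraph_V_eq_iInter_msGraph_V F0 z hT ⟨q, hq⟩ k)
  ext x
  simp only [Set.mem_iInter, WBG.mem_CnSet_iff _ _ _ hn hTn,
    WBG.mem_CnSet_iff _ _ _ hn ((primLen_spec z hT).2.1.trans hTn)]
  constructor
  · rintro ⟨hper, hclose, hmem⟩ j hj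
    exact ⟨hper, hclose, fun k hk => Set.mem_iInter₂.1 ((hphase k _).1 (hmem k hk)) j hj⟩
  · intro h
    obtain ⟨hper, hclose, -⟩ := h j₀ hj₀
    exact ⟨hper, hclose, fun k hk =>
      (hphase k _).2 (Set.mem_iInter₂.2 fun j hj => (h j hj).2.2 k hk)⟩

/-- **Lemma.** Let `X = X(F⁰, ℓ, T)` be a PFT in standard form with MS presentation `G_X`,
`z ∈ Ω_T`, `0 ≤ q ≤ L_z - 1`, and `J = J(z,q)`. Then for every `n ≡ 0 (mod T)` with
`n ≥ 1` and every word `w ∈ Σ^ℓ`, `C_n(w^(q))_{G_z} = ⋂_{j ∈ J} C_n(w^(j))_{G_X}`. -/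
theorem zGraph_CnSet_eq_iInter {A : Type} [Fintype A] [Nonempty A] {ℓ T : ℕ}
    (hℓ : 1 ≤ ℓ) (hT : 1 ≤ T) (F0 : Set (Word A ℓ))
    (Ω : Finset (Fin T → Bool)) (hΩ : IsRepSet Ω)
    (z : Fin T → Bool) (hz : z ∈ Ω) (q : ℕ) (hq : q < primLen z)
    (n : ℕ) (hn : 0 < n) (hTn : T ∣ n) (w : Word A ℓ) :
    (zGraph F0 z).CnSet ⟨q, hq⟩ w n =
      ⋂ j ∈ Jset z q, (msGraph F0 T).CnSet j w n :=
  zGraph_CnSet_eq_iInter_general F0 Ω hΩ z hz q hq n hn hTn w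
end
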